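/- Let G be a finite connected graph that is not a star. Then G has a dominating set of minimum cardinality γ(G) that contains no leaf of G. -/

import Mathlib

/-!
Send every leaf to its unique neighbour and fix all other vertices. The image of a dominating
set under this map is again dominating and no larger, so the image of a minimum dominating set
is a minimum dominating set. It contains no leaf: the neighbour of a leaf is itself a leaf only
when the graph is `K₂`, the star `K_{1,1}`.
-/

open SimpleGraph

/-- A dominating set: every vertex outside `S` has a neighbor in `S`. -/
def IsDominatingSet {V : Type} (G : SimpleGraph V) (S : Set V) : Prop :=
  ∀ v ∉ S, ∃ u ∈ S, G.Adj u v

/-- A total dominating set: every vertex has a neighbor in `S`. -/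
def IsTotalDominatingSet {V : Type} (G : SimpleGraph V) (S : Set V) : Prop :=
  ∀ v : V, ∃ u ∈ S, G.Adj u v

/-- `u` is within distance two of `v`. -/
def WithinTwo {V : Type} (G : SimpleGraph V) (u v : V) : Prop :=
  G.Adj u v ∨ ∃ w, G.Adj u w ∧ G.Adj w v

/-- A semitotal dominating set: a dominating set in which every vertex is within
distance two of another vertex of the set. -/
def IsSemitotalDominatingSet {V : Type} (G : SimpleGraph V) (S : Set V) : Prop :=
  IsDominatingSet G S ∧ ∀ v ∈ S, ∃ u ∈ S, u ≠ v ∧ WithinTwo G u v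

/-- The domination number `γ(G)`. -/
noncomputable def dominationNumber {V : Type} (G : SimpleGraph V) : ℕ :=
  sInf {n | ∃ S : Set V, IsDominatingSet G S ∧ S.ncard = n}

/-- The total domination number `γ_t(G)`. -/
noncomputable def totalDominationNumber {V : Type} (G : SimpleGraph V) : ℕ :=
  sInf {n | ∃ S : Set V, IsTotalDominatingSet G S ∧ S.ncard = n}

/-- The semitotal domination number `γ_t2(G)`. -/
noncomputable def semitotalDominationNumber {V : Type} (G : SimpleGraph V) : ℕ :=
  sInf {n | ∃ S : Set V, IsSemitotalDominatingSet G S ∧ S.ncard = n}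

/-- A leaf: a vertex of degree one. -/
def IsLeaf {V : Type} (G : SimpleGraph V) (v : V) : Prop :=
  (G.neighborSet v).ncard = 1

/-- A support vertex: a vertex adjacent to a leaf. -/
def IsSupport {V : Type} (G : SimpleGraph V) (v : V) : Prop :=
  ∃ u, G.Adj v u ∧ IsLeaf G u

/-- A star: a graph isomorphic to `K_{1,m}` for some `m ≥ 1`. -/
def IsStar {V : Type} (G : SimpleGraph V) : Prop :=
  ∃ m : ℕ, 1 ≤ m ∧ Nonempty (G ≃g completeBipartiteGraph Unit (Fin m))

/-- The graph obtained from the disjoint union of `G` and `H` by adding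
the single edge joining `v : V` to `w : W`. -/
def attach {V W : Type} (G : SimpleGraph V) (H : SimpleGraph W) (v : V) (w : W) :
    SimpleGraph (V ⊕ W) where
  Adj x y :=
    match x, y with
    | Sum.inl a, Sum.inl b => G.Adj a b
    | Sum.inr a, Sum.inr b => H.Adj a b
    | Sum.inl a, Sum.inr b => a = v ∧ b = w
    | Sum.inr a, Sum.inl b => b = v ∧ a = w
  symm := ⟨by
    rintro (a | a) (b | b) h
    · exact G.adj_symm h
    · exact ⟨h.1, h.2⟩
    · exact ⟨h.1, h.2⟩
    · exact H.adj_symm h⟩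
  loopless := ⟨by
    rintro (a | a) h
    · exact G.irrefl h
    · exact H.irrefl h⟩

/-- The statuses used to label the vertices of trees in the family `𝒯`. -/
inductive Label : Type
  | A | B | C
deriving DecidableEq

/-- The labeling of the path `P₅` assigning `A` to the two support vertices,
`C` to the two leaves and `B` to the center. -/
def pathLabel : Fin 5 → Label
  | 0 => Label.C
  | 1 => Label.A
  | 2 => Label.B
  | 3 => Label.A
  | 4 => Label.C

/-- The family `𝒯` of labeled trees: it contains the labeled path `P₅`, and is closed
under operation `𝒪₁` (attach a new leaf labeled `C` to a vertex labeled `A`), operation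
`𝒪₂` (attach a labeled path `P₅` to a degree-one vertex labeled `C`), and under
isomorphism of labeled graphs. -/
inductive TFamily : ∀ {V : Type}, SimpleGraph V → (V → Label) → Prop
  | base : TFamily (SimpleGraph.pathGraph 5) pathLabel
  | op1 {V : Type} {G : SimpleGraph V} {f : V → Label} (v : V)
      (hv : f v = Label.A) (h : TFamily G f) :
      TFamily (attach G (⊥ : SimpleGraph (Fin 1)) v 0)
        (Sum.elim f (fun _ => Label.C))
  | op2 {V : Type} {G : SimpleGraph V} {f : V → Label} (v : V)
      (hv : f v = Label.C) (hdeg : (G.neighborSet v).ncard = 1) (h : TFamily G f) :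
      TFamily (attach G (SimpleGraph.pathGraph 5) v 0) (Sum.elim f pathLabel)
  | iso {V W : Type} {G : SimpleGraph V} {H : SimpleGraph W} {f : V → Label}
      (e : G ≃g H) (h : TFamily G f) : TFamily H (fun w => f (e.symm w))

/-- The subdivided star with `t` leaves: center `none`, and for each `i : Fin t`
a path `none — some (i,0) — some (i,1)`. -/
def subdividedStar (t : ℕ) : SimpleGraph (Option (Fin t × Fin 2)) :=
  SimpleGraph.fromRel (fun x y =>
    match x, y with
    | none, some p => p.2 = 0
    | some p, some q => p.1 = q.1 ∧ p.2 = 0 ∧ q.2 = 1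
    | _, _ => False)

/-- The tree `Y` with three leaves, obtained from the star `K_{1,3}` with center `0`
by subdividing exactly one edge: edges `0-1`, `0-2`, `0-3`, `3-4`.  Its leaves are
`1`, `2`, `4`; the leaf-neighbors of the center are `1` and `2`. -/
def Ytree : SimpleGraph (Fin 5) :=
  SimpleGraph.fromRel (fun x y =>
    (x = 0 ∧ y = 1) ∨ (x = 0 ∧ y = 2) ∨ (x = 0 ∧ y = 3) ∨ (x = 3 ∧ y = 4))

/-- An almost dominating set of `G` relative to `v`: dominates every vertex except
possibly `v`. -/
def IsAlmostDominatingSet {V : Type} (G : SimpleGraph V) (v : V) (S : Set V) : Prop :=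
  ∀ w, w ≠ v → w ∉ S → ∃ u ∈ S, G.Adj u w

/-- The almost domination number `γ(G; v)`. -/
noncomputable def almostDominationNumber {V : Type} (G : SimpleGraph V) (v : V) : ℕ :=
  sInf {n | ∃ S : Set V, IsAlmostDominatingSet G v S ∧ S.ncard = n}

/-- The family `𝒪` of trees: all trees obtainable from the path `P₄` by a finite
sequence of the operations `𝒪₁`–`𝒪₄` (and taking isomorphic copies). -/
inductive OFamily : ∀ {V : Type}, SimpleGraph V → Prop
  | base : OFamily (SimpleGraph.pathGraph 4)
  | op1 {V : Type} {G : SimpleGraph V} (v : V)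
      (hv : ∃ S : Set V, IsSemitotalDominatingSet G S ∧
        S.ncard = semitotalDominationNumber G ∧ v ∈ S)
      (h : OFamily G) :
      OFamily (attach G (⊥ : SimpleGraph (Fin 1)) v 0)
  | op2short {V : Type} {G : SimpleGraph V} (v : V)
      (hv : almostDominationNumber G v = dominationNumber G) (h : OFamily G) :
      OFamily (attach G (SimpleGraph.pathGraph 2) v 0)
  | op2long {V : Type} {G : SimpleGraph V} (v : V)
      (hv : almostDominationNumber G v = dominationNumber G) (h : OFamily G) :
      OFamily (attach G (SimpleGraph.pathGraph 5) v 0)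
  | op3 {V : Type} {G : SimpleGraph V} (v : V) (t : ℕ) (ht : 2 ≤ t) (h : OFamily G) :
      OFamily (attach G (subdividedStar t) v none)
  | op4 {V : Type} {G : SimpleGraph V} (v : V) (h : OFamily G) :
      OFamily (attach G Ytree v 1)
  | iso {V W : Type} {G : SimpleGraph V} {H : SimpleGraph W}
      (e : G ≃g H) (h : OFamily G) : OFamily H

variable {V : Type} {G : SimpleGraph V}

lemma dominationNumber_le_ncard {S : Set V} (hS : IsDominatingSet G S) :
    dominationNumber G ≤ S.ncard :=
  Nat.sInf_le ⟨S, hS, rfl⟩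

lemma exists_isDominatingSet_ncard_eq_dominationNumber (G : SimpleGraph V) :
    ∃ S : Set V, IsDominatingSet G S ∧ S.ncard = dominationNumber G :=
  Nat.sInf_mem (s := {n | ∃ S : Set V, IsDominatingSet G S ∧ S.ncard = n})
    ⟨_, Set.univ, fun v hv => absurd (Set.mem_univ v) hv, rfl⟩

lemma isStar_of_neighborSet_eq_singleton (hc : G.Connected) {u v : V} (huv : G.Adj u v)
    (hu : G.neighborSet u = {v}) (hv : G.neighborSet v = {u}) : IsStar G := by
  have hclosed : ∀ a b, (a = u ∨ a = v) → G.Adj a b → b = u ∨ b = v := by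
    rintro a b (rfl | rfl) hab
    · exact Or.inr (hu ▸ hab : b ∈ ({v} : Set V))
    · exact Or.inl (hv ▸ hab : b ∈ ({u} : Set V))
  have huniv : ∀ x, x = u ∨ x = v := fun x => by
    induction (reachable_iff_reflTransGen u x).mp (hc u x) with
    | refl => exact Or.inl rfl
    | tail _ hab ih => exact hclosed _ _ ih hab
  classical
  refine ⟨1, le_rfl, ⟨⟨fun x => if x = u then Sum.inl () else Sum.inr 0,
    Sum.elim (fun _ => u) (fun _ => v), fun x => ?_, fun s => ?_⟩, fun {x y} => ?_⟩⟩
  · rcases huniv x with rfl | rfl <;> simp [huv.ne.symm]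
  · rcases s with _ | s
    · simp
    · simp [huv.ne.symm, Subsingleton.elim s 0]
  · rcases huniv x with rfl | rfl <;> rcases huniv y with rfl | rfl <;>
      simp [huv, huv.symm, huv.ne.symm]

variable (G) in
noncomputable def leafToSupport (v : V) : V :=
  open Classical in if h : IsLeaf G v then (Set.ncard_eq_one.mp h).choose else v

lemma neighborSet_eq_leafToSupport {v : V} (h : IsLeaf G v) :
    G.neighborSet v = {leafToSupport G v} := by
  rw [leafToSupport, dif_pos h]
  exact (Set.ncard_eq_one.mp h).choose_spec

lemma leafToSupport_of_not_isLeaf {v : V} (h : ¬ IsLeaf G v) : leafToSupport G v = v := by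
  rw [leafToSupport, dif_neg h]

lemma adj_leafToSupport {v : V} (h : IsLeaf G v) : G.Adj v (leafToSupport G v) := by
  rw [← mem_neighborSet, neighborSet_eq_leafToSupport h]
  exact Set.mem_singleton _

lemma eq_leafToSupport_of_adj {v w : V} (h : IsLeaf G v) (hw : G.Adj v w) :
    w = leafToSupport G v := by
  rw [← Set.mem_singleton_iff, ← neighborSet_eq_leafToSupport h]
  exact hw

lemma not_isLeaf_leafToSupport (hc : G.Connected) (hs : ¬ IsStar G) (v : V) :
    ¬ IsLeaf G (leafToSupport G v) := by
  by_cases hv : IsLeaf G v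
  · intro hu
    have hadj := adj_leafToSupport hv
    have hu' := neighborSet_eq_leafToSupport hu
    rw [← eq_leafToSupport_of_adj hu hadj.symm] at hu'
    exact hs (isStar_of_neighborSet_eq_singleton hc hadj (neighborSet_eq_leafToSupport hv) hu')
  · rwa [leafToSupport_of_not_isLeaf hv]

lemma IsDominatingSet.image_leafToSupport {S : Set V} (hS : IsDominatingSet G S) :
    IsDominatingSet G (leafToSupport G '' S) := by
  intro w hw
  by_cases hwS : w ∈ S
  · -- `w` is not fixed, so it is a leaf dominated by its own image
    have hleaf : IsLeaf G w := by
      by_contra h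
      exact hw ⟨w, hwS, leafToSupport_of_not_isLeaf h⟩
    exact ⟨_, Set.mem_image_of_mem _ hwS, (adj_leafToSupport hleaf).symm⟩
  · obtain ⟨u, huS, huw⟩ := hS w hwS
    by_cases hu : IsLeaf G u
    · exact absurd ⟨u, huS, (eq_leafToSupport_of_adj hu huw).symm⟩ hw
    · exact ⟨u, ⟨u, huS, leafToSupport_of_not_isLeaf hu⟩, huw⟩

/-- A finite connected graph that is not a star has a minimum
dominating set containing no leaf. -/
theorem exists_min_dominating_set_without_leaf {V : Type} [Fintype V] (G : SimpleGraph V)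
    (hc : G.Connected) (hs : ¬ IsStar G) :
    ∃ S : Set V, IsDominatingSet G S ∧ S.ncard = dominationNumber G ∧
      ∀ v ∈ S, ¬ IsLeaf G v := by
  obtain ⟨S, hS, hcard⟩ := exists_isDominatingSet_ncard_eq_dominationNumber G
  have hdom := hS.image_leafToSupport
  refine ⟨leafToSupport G '' S, hdom, ?_, ?_⟩
  · exact le_antisymm (hcard ▸ Set.ncard_image_le (Set.toFinite S))
      (dominationNumber_le_ncard hdom)
  · rintro _ ⟨v, -, rfl⟩
    exact not_isLeaf_leafToSupport hc hs v
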